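/- arXiv:1503.03800 — 3 statements merged into one kernel-verified Lean document; each statement's English description precedes it below -/
import Mathlib

section
/- Let Y be a nonempty set, M > 0, and for each n ≥ 1 let d_n be a metric on Y with d_n(x,y) ≤ M for all x, y ∈ Y. Assume that for each n ≥ 2, every sequence in Y that is Cauchy with respect to d_n is also Cauchy with respect to d_{n−1}. Let Z_n denote the completion of (Y, d_n) and for n ≥ 2 let π_n : Z_n → Z_{n−1} denote the continuous extension of the identity map of Y. Then d_∞ := Σ_{n≥1} 2^{−n} d_n is a metric on Y, and the completion Z of (Y, d_∞) is homeomorphic to the inverse limit lim←(Z_n, π_n) := {(z_n)_{n≥1} ∈ Π_{n≥1} Z_n : π_n(z_n) = z_{n−1} for all n ≥ 2} (with the subspace topology from the product topology), via the homeomorphism induced by sending y ∈ Y to the constant thread (y, y, y, …). -/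
/-! Each `d_k` is at most `2^(k+1) d_∞`, so the identity of `Y` extends to maps `f_k : W → Z_k`
from the completion `W` of `(Y, d_∞)`, and these form a thread map `W → lim← Z_k`. Conversely
`d_∞ ≤ Σ_{m<N} 2^{-(m+1)} d_m + 2^{-N} M`, an inequality that passes to `W` by density; it makes
the thread map a uniform embedding, so its image is complete, hence closed. The constant threads
are dense in the inverse limit (an open condition on the first `k` coordinates of a thread is
pulled back to its `k`-th coordinate along the bonding maps), so the image is everything. -/

noncomputable section
open Set Function Filter Topology

section WeightedSum

variable {a : ℕ → ℝ} {M : ℝ}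

theorem tsum_inv_two_pow_succ : ∑' k : ℕ, (2:ℝ)⁻¹ ^ (k + 1) = 1 := by
  simp only [pow_succ', tsum_mul_left, tsum_geometric_inv_two]
  norm_num

theorem summable_inv_two_pow_succ : Summable fun k : ℕ => (2:ℝ)⁻¹ ^ (k + 1) :=
  (summable_nat_add_iff 1).2 (summable_geometric_of_lt_one (by norm_num) (by norm_num))

theorem summable_inv_two_pow_succ_mul (h0 : ∀ k, 0 ≤ a k) (hM : ∀ k, a k ≤ M) :
    Summable fun k => (2:ℝ)⁻¹ ^ (k + 1) * a k :=
  .of_nonneg_of_le (fun k => mul_nonneg (by positivity) (h0 k))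
    (fun k => mul_le_mul_of_nonneg_left (hM k) (by positivity))
    (summable_inv_two_pow_succ.mul_right M)

theorem tsum_inv_two_pow_succ_mul_le (h0 : ∀ k, 0 ≤ a k) (hM : ∀ k, a k ≤ M) :
    ∑' k, (2:ℝ)⁻¹ ^ (k + 1) * a k ≤ M :=
  calc ∑' k, (2:ℝ)⁻¹ ^ (k + 1) * a k ≤ ∑' k : ℕ, (2:ℝ)⁻¹ ^ (k + 1) * M :=
        (summable_inv_two_pow_succ_mul h0 hM).tsum_le_tsum
          (fun k => mul_le_mul_of_nonneg_left (hM k) (by positivity))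
          (summable_inv_two_pow_succ.mul_right M)
    _ = M := by rw [tsum_mul_right, tsum_inv_two_pow_succ, one_mul]

theorem tsum_inv_two_pow_succ_mul_le_sum_add (h0 : ∀ k, 0 ≤ a k) (hM : ∀ k, a k ≤ M) (N : ℕ) :
    ∑' k, (2:ℝ)⁻¹ ^ (k + 1) * a k
      ≤ ∑ m ∈ Finset.range N, (2:ℝ)⁻¹ ^ (m + 1) * a m + (2:ℝ)⁻¹ ^ N * M := by
  rw [← (summable_inv_two_pow_succ_mul h0 hM).sum_add_tsum_nat_add N]
  gcongr
  calc ∑' k, (2:ℝ)⁻¹ ^ (k + N + 1) * a (k + N)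
      = (2:ℝ)⁻¹ ^ N * ∑' k, (2:ℝ)⁻¹ ^ (k + 1) * a (k + N) := by
        rw [← tsum_mul_left]
        congr 1 with k
        ring
    _ ≤ (2:ℝ)⁻¹ ^ N * M := by
        gcongr
        exact tsum_inv_two_pow_succ_mul_le (fun _ => h0 _) fun _ => hM _

theorem sum_inv_two_pow_succ_mul_le {N : ℕ} {δ : ℝ} (hδ : 0 ≤ δ) (h : ∀ m < N, a m ≤ δ) :
    ∑ m ∈ Finset.range N, (2:ℝ)⁻¹ ^ (m + 1) * a m ≤ δ :=
  calc ∑ m ∈ Finset.range N, (2:ℝ)⁻¹ ^ (m + 1) * a m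
      ≤ (∑ m ∈ Finset.range N, (2:ℝ)⁻¹ ^ (m + 1)) * δ := by
        rw [Finset.sum_mul]
        gcongr with m hm
        exact h m (Finset.mem_range.1 hm)
    _ ≤ 1 * δ := by
        gcongr
        rw [← tsum_inv_two_pow_succ]
        exact summable_inv_two_pow_succ.sum_le_tsum _ fun _ _ => by positivity
    _ = δ := one_mul δ

end WeightedSum

section WeightedDist

variable {Y : Type*} {d : ℕ → Y → Y → ℝ} {M : ℝ}

def weightedDist (d : ℕ → Y → Y → ℝ) (x y : Y) : ℝ :=
  ∑' k, (2:ℝ)⁻¹ ^ (k + 1) * d k x y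

theorem weightedDist_self (h : ∀ k x, d k x x = 0) (x : Y) : weightedDist d x x = 0 := by
  simp [weightedDist, h]

theorem weightedDist_comm (h : ∀ k x y, d k x y = d k y x) (x y : Y) :
    weightedDist d x y = weightedDist d y x := by
  simp only [weightedDist, h _ x y]

variable (h0 : ∀ k x y, 0 ≤ d k x y) (hM : ∀ k x y, d k x y ≤ M)
include h0 hM

theorem weightedDist_triangle (h : ∀ k x y z, d k x z ≤ d k x y + d k y z) (x y z : Y) :
    weightedDist d x z ≤ weightedDist d x y + weightedDist d y z := by
  have hs := fun x y => summable_inv_two_pow_succ_mul (h0 · x y) (hM · x y)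
  rw [weightedDist, weightedDist, weightedDist, ← (hs x y).tsum_add (hs y z)]
  refine (hs x z).tsum_le_tsum (fun k => ?_) ((hs x y).add (hs y z))
  rw [← mul_add]
  exact mul_le_mul_of_nonneg_left (h k x y z) (by positivity)

theorem le_two_pow_mul_weightedDist (k : ℕ) (x y : Y) :
    d k x y ≤ 2 ^ (k + 1) * weightedDist d x y := by
  calc d k x y = 2 ^ (k + 1) * ((2:ℝ)⁻¹ ^ (k + 1) * d k x y) := by
        rw [← mul_assoc, ← mul_pow]
        norm_num
    _ ≤ 2 ^ (k + 1) * weightedDist d x y := by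
        gcongr
        exact (summable_inv_two_pow_succ_mul (h0 · x y) (hM · x y)).le_tsum k
          fun m _ => mul_nonneg (by positivity) (h0 m x y)

theorem eq_of_weightedDist_eq_zero (h : ∀ x y, d 0 x y = 0 → x = y) {x y : Y}
    (hxy : weightedDist d x y = 0) : x = y :=
  h x y <| le_antisymm (by simpa [hxy] using le_two_pow_mul_weightedDist h0 hM 0 x y) (h0 0 x y)

theorem weightedDist_le_sum_add (N : ℕ) (x y : Y) :
    weightedDist d x y
      ≤ ∑ m ∈ Finset.range N, (2:ℝ)⁻¹ ^ (m + 1) * d m x y + (2:ℝ)⁻¹ ^ N * M :=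
  tsum_inv_two_pow_succ_mul_le_sum_add (h0 · x y) (hM · x y) N

end WeightedDist

section ProductUniformity

variable {W : Type*} {X : ℕ → Type*} [PseudoMetricSpace W] [∀ k, PseudoMetricSpace (X k)]
  {f : ∀ k, W → X k}

theorem isUniformInducing_pi_of_forall_dist_lt (hf : ∀ k, UniformContinuous (f k))
    (h : ∀ ε > 0, ∃ N, ∃ δ > 0, ∀ w w', (∀ m < N, dist (f m w) (f m w') < δ) → dist w w' < ε) :
    IsUniformInducing fun w k => f k w := by
  refine isUniformInducing_iff'.2 ⟨uniformContinuous_pi.2 hf, fun s hs => ?_⟩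
  obtain ⟨ε, hε, hεs⟩ := Metric.mem_uniformity_dist.1 hs
  obtain ⟨N, δ, hδ, hNδ⟩ := h ε hε
  refine ⟨⋂ m ∈ Finset.range N, {p : (∀ k, X k) × (∀ k, X k) | dist (p.1 m) (p.2 m) < δ},
    (biInter_finset_mem _).2 fun m _ => ?_, fun p hp => hεs (hNδ _ _ fun m hm => ?_)⟩
  · rw [Pi.uniformity]
    exact mem_iInf_of_mem m (preimage_mem_comap (Metric.dist_mem_uniformity hδ))
  · exact mem_iInter₂.1 hp m (Finset.mem_range.2 hm)

theorem isUniformInducing_pi_of_dist_le {M : ℝ} (hf : ∀ k, UniformContinuous (f k))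
    (h : ∀ N w w', dist w w'
      ≤ ∑ m ∈ Finset.range N, (2:ℝ)⁻¹ ^ (m + 1) * dist (f m w) (f m w') + (2:ℝ)⁻¹ ^ N * M) :
    IsUniformInducing fun w k => f k w := by
  refine isUniformInducing_pi_of_forall_dist_lt hf fun ε hε => ?_
  have htail : Tendsto (fun N : ℕ => (2:ℝ)⁻¹ ^ N * M) atTop (𝓝 0) := by
    simpa using (tendsto_pow_atTop_nhds_zero_of_lt_one (by norm_num)
      (by norm_num : (2:ℝ)⁻¹ < 1)).mul_const M
  obtain ⟨N, hN⟩ := (htail.eventually (gt_mem_nhds (half_pos hε))).exists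
  refine ⟨N, ε / 2, half_pos hε, fun w w' hww' => ?_⟩
  calc dist w w' ≤ _ := h N w w'
    _ < ε / 2 + ε / 2 := add_lt_add_of_le_of_lt
        (sum_inv_two_pow_succ_mul_le (half_pos hε).le fun m hm => (hww' m hm).le) hN
    _ = ε := add_halves ε

theorem dist_le_sum_add_of_denseRange {Y : Type*} {j : Y → W} (hj : DenseRange j)
    (hf : ∀ k, Continuous (f k)) (c : ℕ → ℝ) (r : ℝ) (N : ℕ)
    (h : ∀ x y, dist (j x) (j y) ≤ ∑ m ∈ Finset.range N, c m * dist (f m (j x)) (f m (j y)) + r)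
    (w w' : W) : dist w w' ≤ ∑ m ∈ Finset.range N, c m * dist (f m w) (f m w') + r :=
  hj.induction_on₂ (isClosed_le (by fun_prop) (by fun_prop)) h w w'

end ProductUniformity

section InverseLimit

variable {Y : Type*} {Z : ℕ → Type*} [∀ k, PseudoMetricSpace (Z k)] {ι : ∀ k, Y → Z k}
  {π : ∀ k, Z (k + 1) → Z k} {z : ∀ k, Z k}

theorem exists_isOpen_forall_dist_lt (hπc : ∀ k, Continuous (π k))
    (hπι : ∀ k y, π k (ι (k + 1) y) = ι k y) (hz : ∀ k, π k (z (k + 1)) = z k) (k : ℕ) {δ : ℝ}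
    (hδ : 0 < δ) :
    ∃ U : Set (Z k), IsOpen U ∧ z k ∈ U ∧ ∀ y, ι k y ∈ U → ∀ m ≤ k, dist (ι m y) (z m) < δ := by
  induction k with
  | zero =>
    refine ⟨Metric.ball (z 0) δ, Metric.isOpen_ball, Metric.mem_ball_self hδ, ?_⟩
    rintro y hy m hm
    obtain rfl := Nat.le_zero.1 hm
    exact hy
  | succ k ih =>
    obtain ⟨U, hUo, hzU, hU⟩ := ih
    refine ⟨π k ⁻¹' U ∩ Metric.ball (z (k + 1)) δ, (hUo.preimage (hπc k)).inter Metric.isOpen_ball,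
      ⟨by rwa [mem_preimage, hz k], Metric.mem_ball_self hδ⟩, ?_⟩
    rintro y ⟨hyU, hyball⟩ m hm
    rcases Nat.of_le_succ hm with hm | rfl
    · exact hU y (by rwa [mem_preimage, hπι] at hyU) m hm
    · exact hyball

theorem exists_tendsto_thread (hπc : ∀ k, Continuous (π k))
    (hπι : ∀ k y, π k (ι (k + 1) y) = ι k y) (hιd : ∀ k, DenseRange (ι k))
    (hz : ∀ k, π k (z (k + 1)) = z k) :
    ∃ y : ℕ → Y, Tendsto (fun n k => ι k (y n)) atTop (𝓝 z) := by
  have hy : ∀ n : ℕ, ∃ y, ∀ m ≤ n, dist (ι m y) (z m) < 1 / (n + 1) := fun n => by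
    obtain ⟨U, hUo, hzU, hU⟩ := exists_isOpen_forall_dist_lt hπc hπι hz n Nat.one_div_pos_of_nat
    obtain ⟨y, hy⟩ := (hιd n).exists_mem_open hUo ⟨_, hzU⟩
    exact ⟨y, hU y hy⟩
  choose y hy using hy
  refine ⟨y, tendsto_pi_nhds.2 fun m => tendsto_iff_dist_tendsto_zero.2 ?_⟩
  exact squeeze_zero' (.of_forall fun n => dist_nonneg)
    ((eventually_ge_atTop m).mono fun n hn => (hy n m hn).le)
    tendsto_one_div_add_atTop_nhds_zero_nat

end InverseLimit

theorem exists_homeomorph_threads {W : Type*} [MetricSpace W] [CompleteSpace W] {Z : ℕ → Type*}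
    [∀ k, MetricSpace (Z k)] {π : ∀ k, Z (k + 1) → Z k} {f : ∀ k, W → Z k}
    (hF : IsUniformInducing fun w k => f k w) (hthread : ∀ k w, π k (f (k + 1) w) = f k w)
    (hdense : ∀ z : ∀ k, Z k, (∀ k, π k (z (k + 1)) = z k) →
      ∃ w : ℕ → W, Tendsto (fun n k => f k (w n)) atTop (𝓝 z)) :
    ∃ h : W ≃ₜ {z : ∀ k, Z k // ∀ k, π k (z (k + 1)) = z k},
      ∀ w, (h w : ∀ k, Z k) = fun k => f k w := by
  have hrange : range (fun w k => f k w) = {z | ∀ k, π k (z (k + 1)) = z k} := by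
    refine Subset.antisymm ?_ fun z hz => ?_
    · exact range_subset_iff.2 fun w k => hthread k w
    obtain ⟨w, hw⟩ := hdense z hz
    exact hF.isComplete_range.isClosed.mem_of_tendsto hw (.of_forall fun n => mem_range_self _)
  exact ⟨hF.isUniformEmbedding.isEmbedding.toHomeomorph.trans (.setCongr hrange), fun w => rfl⟩

/- Indexing: `dn k`, `Z k`, `ι k` are the paper's d_{k+1}, Z_{k+1}, and `π k : Z (k+1) → Z k`
is the paper's π_{k+2}. -/
theorem stmt_10_general (Y : Type*) (M : ℝ)
    -- the metrics d_n on Y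
    (dn : ℕ → Y → Y → ℝ)
    (h_self : ∀ (k : ℕ) (x : Y), dn k x x = 0)
    (h_eq : ∀ (k : ℕ) (x y : Y), dn k x y = 0 → x = y)
    (h_symm : ∀ (k : ℕ) (x y : Y), dn k x y = dn k y x)
    (h_tri : ∀ (k : ℕ) (x y z : Y), dn k x z ≤ dn k x y + dn k y z)
    -- the metrics are uniformly bounded by M
    (h_bdd : ∀ (k : ℕ) (x y : Y), dn k x y ≤ M)
    -- Z_n is the completion of (Y, d_n): a complete metric space in which Y
    -- embeds isometrically (for d_n) with dense image
    (Z : ℕ → Type*) [∀ k, MetricSpace (Z k)] (hZc : ∀ k, CompleteSpace (Z k))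
    (ι : ∀ k, Y → Z k)
    (hι : ∀ (k : ℕ) (x y : Y), dist (ι k x) (ι k y) = dn k x y)
    (hιd : ∀ k, DenseRange (ι k))
    -- π_n : Z_n → Z_{n-1} is the continuous extension of the identity of Y
    (π : ∀ k, Z (k+1) → Z k)
    (hπc : ∀ k, Continuous (π k))
    (hπι : ∀ (k : ℕ) (y : Y), π k (ι (k+1) y) = ι k y)
    -- Z is the completion of (Y, d_∞)
    (W : Type*) [MetricSpace W] [CompleteSpace W] (j : Y → W)
    (hj : ∀ x y : Y, dist (j x) (j y) = ∑' k : ℕ, (2:ℝ)⁻¹ ^ (k+1) * dn k x y)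
    (hjd : DenseRange j) :
    -- d_∞ is a metric on Y:
    ((∀ x : Y, (∑' k : ℕ, (2:ℝ)⁻¹ ^ (k+1) * dn k x x) = 0) ∧
     (∀ x y : Y, (∑' k : ℕ, (2:ℝ)⁻¹ ^ (k+1) * dn k x y) = 0 → x = y) ∧
     (∀ x y : Y, (∑' k : ℕ, (2:ℝ)⁻¹ ^ (k+1) * dn k x y)
        = ∑' k : ℕ, (2:ℝ)⁻¹ ^ (k+1) * dn k y x) ∧
     (∀ x y z : Y, (∑' k : ℕ, (2:ℝ)⁻¹ ^ (k+1) * dn k x z)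
        ≤ (∑' k : ℕ, (2:ℝ)⁻¹ ^ (k+1) * dn k x y)
          + ∑' k : ℕ, (2:ℝ)⁻¹ ^ (k+1) * dn k y z)) ∧
    -- and the completion of (Y, d_∞) is homeomorphic to the inverse limit
    -- lim← (Z_n, π_n), via the map sending y to the constant thread
    ∃ h : W ≃ₜ {z : ∀ k, Z k // ∀ k, π k (z (k+1)) = z k},
      ∀ y : Y, h (j y) = ⟨fun k => ι k y, fun k => hπι k y⟩ := by
  have h0 : ∀ k x y, 0 ≤ dn k x y := fun k x y => by
    linarith [h_tri k x y x, h_self k x, h_symm k x y]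
  refine ⟨⟨weightedDist_self h_self, fun x y => eq_of_weightedDist_eq_zero h0 h_bdd (h_eq 0),
    weightedDist_comm h_symm, weightedDist_triangle h0 h_bdd h_tri⟩, ?_⟩
  let _ : PseudoMetricSpace Y := .induced j inferInstance
  have hdist : ∀ x y : Y, dist (j x) (j y) = weightedDist dn x y := hj
  have hji : IsUniformInducing j := (Isometry.of_dist_eq (f := j) fun _ _ => rfl).isUniformInducing
  have hdi := hji.isDenseInducing hjd
  have hιu : ∀ k, UniformContinuous (ι k) := fun k =>
    (LipschitzWith.of_dist_le_mul (K := 2 ^ (k + 1)) fun x y => by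
      rw [hι, show dist x y = dist (j x) (j y) from rfl, hdist]
      exact_mod_cast le_two_pow_mul_weightedDist h0 h_bdd k x y).uniformContinuous
  set f := fun k => hdi.extend (ι k)
  have hfj : ∀ k y, f k (j y) = ι k y := fun k => hdi.extend_eq (hιu k).continuous
  have hfu : ∀ k, UniformContinuous (f k) := fun k =>
    uniformContinuous_uniformly_extend hji hjd (hιu k)
  have hthread : ∀ k w, π k (f (k + 1) w) = f k w := fun k => congrFun <|
    hjd.equalizer ((hπc k).comp (hfu (k + 1)).continuous) (hfu k).continuous <|
      funext fun y => by simp only [comp_apply, hfj, hπι]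
  have hF : IsUniformInducing fun w k => f k w :=
    isUniformInducing_pi_of_dist_le hfu fun N => dist_le_sum_add_of_denseRange hjd
      (fun k => (hfu k).continuous) _ _ N fun x y => by
        simpa only [hfj, hι, hdist] using weightedDist_le_sum_add h0 h_bdd N x y
  obtain ⟨h, hh⟩ := exists_homeomorph_threads hF hthread fun z hz => by
    obtain ⟨y, hy⟩ := exists_tendsto_thread hπc hπι hιd hz
    exact ⟨j ∘ y, by simpa only [comp_apply, hfj] using hy⟩
  exact ⟨h, fun y => Subtype.ext ((hh (j y)).trans (funext fun k => hfj k y))⟩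

theorem stmt_10 (Y : Type*) [Nonempty Y] (M : ℝ) (hM : 0 < M)
    -- the metrics d_n on Y
    (dn : ℕ → Y → Y → ℝ)
    (h_self : ∀ (k : ℕ) (x : Y), dn k x x = 0)
    (h_eq : ∀ (k : ℕ) (x y : Y), dn k x y = 0 → x = y)
    (h_symm : ∀ (k : ℕ) (x y : Y), dn k x y = dn k y x)
    (h_tri : ∀ (k : ℕ) (x y z : Y), dn k x z ≤ dn k x y + dn k y z)
    -- the metrics are uniformly bounded by M
    (h_bdd : ∀ (k : ℕ) (x y : Y), dn k x y ≤ M)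
    -- every d_{n}-Cauchy sequence is d_{n-1}-Cauchy (n ≥ 2)
    (h_cauchy : ∀ (k : ℕ) (u : ℕ → Y),
      (∀ ε > (0:ℝ), ∃ N : ℕ, ∀ p ≥ N, ∀ q ≥ N, dn (k+1) (u p) (u q) < ε) →
      (∀ ε > (0:ℝ), ∃ N : ℕ, ∀ p ≥ N, ∀ q ≥ N, dn k (u p) (u q) < ε))
    -- Z_n is the completion of (Y, d_n): a complete metric space in which Y
    -- embeds isometrically (for d_n) with dense image
    (Z : ℕ → Type*) [∀ k, MetricSpace (Z k)] (hZc : ∀ k, CompleteSpace (Z k))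
    (ι : ∀ k, Y → Z k)
    (hι : ∀ (k : ℕ) (x y : Y), dist (ι k x) (ι k y) = dn k x y)
    (hιd : ∀ k, DenseRange (ι k))
    -- π_n : Z_n → Z_{n-1} is the continuous extension of the identity of Y
    (π : ∀ k, Z (k+1) → Z k)
    (hπc : ∀ k, Continuous (π k))
    (hπι : ∀ (k : ℕ) (y : Y), π k (ι (k+1) y) = ι k y)
    -- Z is the completion of (Y, d_∞)
    (W : Type*) [MetricSpace W] [CompleteSpace W] (j : Y → W)
    (hj : ∀ x y : Y, dist (j x) (j y) = ∑' k : ℕ, (2:ℝ)⁻¹ ^ (k+1) * dn k x y)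
    (hjd : DenseRange j) :
    -- d_∞ is a metric on Y:
    ((∀ x : Y, (∑' k : ℕ, (2:ℝ)⁻¹ ^ (k+1) * dn k x x) = 0) ∧
     (∀ x y : Y, (∑' k : ℕ, (2:ℝ)⁻¹ ^ (k+1) * dn k x y) = 0 → x = y) ∧
     (∀ x y : Y, (∑' k : ℕ, (2:ℝ)⁻¹ ^ (k+1) * dn k x y)
        = ∑' k : ℕ, (2:ℝ)⁻¹ ^ (k+1) * dn k y x) ∧
     (∀ x y z : Y, (∑' k : ℕ, (2:ℝ)⁻¹ ^ (k+1) * dn k x z)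
        ≤ (∑' k : ℕ, (2:ℝ)⁻¹ ^ (k+1) * dn k x y)
          + ∑' k : ℕ, (2:ℝ)⁻¹ ^ (k+1) * dn k y z)) ∧
    -- and the completion of (Y, d_∞) is homeomorphic to the inverse limit
    -- lim← (Z_n, π_n), via the map sending y to the constant thread
    ∃ h : W ≃ₜ {z : ∀ k, Z k // ∀ k, π k (z (k+1)) = z k},
      ∀ y : Y, h (j y) = ⟨fun k => ι k y, fun k => hπι k y⟩ :=
  stmt_10_general Y M dn h_self h_eq h_symm h_tri h_bdd Z hZc ι hι hιd π hπc hπι W j hj hjd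
end
end

section
/- Let X and Z be compact metric spaces, let φ : X → X be a minimal homeomorphism (every φ-orbit is dense in X), let ζ : Z → Z be a homeomorphism, and let q : Z → X be a continuous map satisfying q ∘ ζ = φ ∘ q. Suppose there is a dense subset D ⊆ Z such that q^{−1}({q(z)}) = {z} for every z ∈ D. Then ζ is minimal; that is, every nonempty closed subset Y ⊆ Z with ζ(Y) = Y equals Z (equivalently, every ζ-orbit is dense in Z). -/
/-!
If `C ⊆ Z` is nonempty, closed and `ζ`-invariant, then `q '' C` is nonempty, compact and
`φ`-invariant, hence all of `X` by minimality of `φ`. A point `z ∈ D` is the only preimage of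
`q z`, so it lies in `C`; thus `C ⊇ D` is dense and closed, i.e. `C = Z`. Density of the
`ζ`-orbits follows by applying this to orbit closures.
-/

open Set

open scoped Pointwise in
theorem Equiv.Perm.zpow_apply_mem_of_image_eq {α : Type*} {f : Equiv.Perm α} {K : Set α}
    (hK : f '' K = K) {x : α} (hx : x ∈ K) (n : ℤ) : (f ^ n) x ∈ K := by
  have hf : f ∈ MulAction.stabilizer (Equiv.Perm α) K := hK
  have hfn : (f ^ n) • K = K := (MulAction.stabilizer _ K).zpow_mem hf n
  exact hfn ▸ smul_mem_smul_set hx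

theorem Equiv.Perm.image_range_zpow_apply {α : Type*} (f : Equiv.Perm α) (x : α) :
    f '' range (fun n : ℤ => (f ^ n) x) = range (fun n : ℤ => (f ^ n) x) := by
  calc f '' range (fun n : ℤ => (f ^ n) x)
      = range ((fun n : ℤ => (f ^ n) x) ∘ (1 + ·)) := by
        rw [← range_comp]
        congr 1
        funext n
        rw [Function.comp_apply, Function.comp_apply, zpow_one_add, Equiv.Perm.mul_apply]
    _ = range (fun n : ℤ => (f ^ n) x) := (add_left_surjective 1).range_comp _

namespace Homeomorph

variable {Y : Type*} [TopologicalSpace Y] (f : Y ≃ₜ Y)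

theorem eq_univ_of_dense_orbits
    (hmin : ∀ y : Y, Dense (range fun n : ℤ => (f.toEquiv ^ n) y))
    {K : Set Y} (hne : K.Nonempty) (hcl : IsClosed K) (hK : f '' K = K) : K = univ := by
  obtain ⟨x, hx⟩ := hne
  have horbit : range (fun n : ℤ => (f.toEquiv ^ n) x) ⊆ K := by
    rintro _ ⟨n, rfl⟩
    exact Equiv.Perm.zpow_apply_mem_of_image_eq hK hx n
  rw [← hcl.closure_eq]
  exact ((hmin x).mono horbit).closure_eq

theorem dense_orbit_of_forall_eq_univ
    (hmin : ∀ K : Set Y, K.Nonempty → IsClosed K → f '' K = K → K = univ) (y : Y) :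
    Dense (range fun n : ℤ => (f.toEquiv ^ n) y) := by
  rw [dense_iff_closure_eq]
  refine hmin _ ⟨y, subset_closure ⟨0, rfl⟩⟩ isClosed_closure ?_
  rw [f.image_closure]
  exact congrArg closure (Equiv.Perm.image_range_zpow_apply f.toEquiv y)

end Homeomorph

theorem mem_of_preimage_singleton_eq {Z X : Type*} {q : Z → X} {C : Set Z} (hC : q '' C = univ)
    {z : Z} (hz : q ⁻¹' {q z} = {z}) : z ∈ C := by
  obtain ⟨c, hc, hqc⟩ : q z ∈ q '' C := hC ▸ mem_univ _
  have : c ∈ q ⁻¹' {q z} := hqc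
  rw [hz, mem_singleton_iff] at this
  rwa [← this]

theorem Function.Semiconj.image_image_eq {Z X : Type*} {q : Z → X} {ζ : Z → Z} {φ : X → X}
    (h : Function.Semiconj q ζ φ) {C : Set Z} (hC : ζ '' C = C) : φ '' (q '' C) = q '' C := by
  rw [← (h.set_image C), hC]

theorem stmt_18_general {X Z : Type*}
    [MetricSpace X] [MetricSpace Z] [CompactSpace Z]
    (φ : X ≃ₜ X)
    -- φ is minimal: every orbit is dense
    (hφmin : ∀ x : X, Dense (Set.range fun n : ℤ => (φ.toEquiv ^ n) x))
    (ζ : Z ≃ₜ Z) (q : Z → X) (hq : Continuous q)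
    (hfactor : ∀ z : Z, q (ζ z) = φ (q z))
    (D : Set Z) (hD : Dense D)
    (hinj : ∀ z ∈ D, q ⁻¹' {q z} = {z}) :
    -- ζ is minimal
    (∀ C : Set Z, C.Nonempty → IsClosed C → ζ '' C = C → C = Set.univ) ∧
    (∀ z : Z, Dense (Set.range fun n : ℤ => (ζ.toEquiv ^ n) z)) := by
  have hmin : ∀ C : Set Z, C.Nonempty → IsClosed C → ζ '' C = C → C = univ := by
    intro C hne hcl hC
    have hqC : q '' C = univ :=
      φ.eq_univ_of_dense_orbits hφmin (hne.image q) (hcl.isCompact.image hq).isClosed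
        (Function.Semiconj.image_image_eq hfactor hC)
    have hDC : D ⊆ C := fun z hz => mem_of_preimage_singleton_eq hqC (hinj z hz)
    rw [← hcl.closure_eq]
    exact (hD.mono hDC).closure_eq
  exact ⟨hmin, ζ.dense_orbit_of_forall_eq_univ hmin⟩

theorem stmt_18 {X Z : Type*}
    [MetricSpace X] [CompactSpace X] [MetricSpace Z] [CompactSpace Z]
    (φ : X ≃ₜ X)
    -- φ is minimal: every orbit is dense
    (hφmin : ∀ x : X, Dense (Set.range fun n : ℤ => (φ.toEquiv ^ n) x))
    (ζ : Z ≃ₜ Z) (q : Z → X) (hq : Continuous q)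
    (hfactor : ∀ z : Z, q (ζ z) = φ (q z))
    (D : Set Z) (hD : Dense D)
    (hinj : ∀ z ∈ D, q ⁻¹' {q z} = {z}) :
    -- ζ is minimal
    (∀ C : Set Z, C.Nonempty → IsClosed C → ζ '' C = C → C = Set.univ) ∧
    (∀ z : Z, Dense (Set.range fun n : ℤ => (ζ.toEquiv ^ n) z)) :=
  stmt_18_general φ hφmin ζ q hq hfactor D hD hinj
end

section
/- Let X be a compact Hausdorff space, let φ : X → X be a minimal homeomorphism (every φ-orbit is dense in X), let n ≥ 1, and let λ : [0,1] → X be a continuous map such that ⋃_{i=0}^{n−1} φ^i(λ([0,1])) ≠ X. Then there exists an integer k ≥ 2 such that there is no tuple (s_1, …, s_k) ∈ [0,1]^k satisfying φ^n(λ(s_i)) = λ(s_{i+1}) for all 1 ≤ i < k. -/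
/-! If arbitrarily long chains existed, compactness would give a single point `x` with
`φ^[n*j] x ∈ λ([0,1])` for every `j`, so the whole forward orbit of `x` stays in the closed set
`S = ⋃_{i<n} φ^[i] (λ([0,1]))`. The closure of that forward orbit is closed, nonempty and
forward invariant; in a compact space such a set contains a full `ℤ`-orbit (any point of
`⋂_j φ^[j] Y` has all its backward iterates in `Y`), hence is everything by minimality,
forcing `S = X`. -/

open Set Function

theorem iterate_apply_zero_of_chain {α : Type*} {g : α → α} {k : ℕ} {a : Fin k → α}
    (ha : ∀ (i : Fin k) (h : (i : ℕ) + 1 < k), g (a i) = a ⟨i + 1, h⟩) :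
    ∀ (j : ℕ) (hj : j < k), g^[j] (a ⟨0, by omega⟩) = a ⟨j, hj⟩
  | 0, _ => rfl
  | j + 1, hj => by
    rw [iterate_succ_apply', iterate_apply_zero_of_chain ha j (by omega)]
    exact ha ⟨j, by omega⟩ hj

theorem iterate_mem_biUnion_of_forall_iterate_iterate_mem {α : Type*} {f : α → α} {n : ℕ}
    (hn : 1 ≤ n) {K : Set α} {x : α} (hx : ∀ j, (f^[n])^[j] x ∈ K) (m : ℕ) :
    f^[m] x ∈ ⋃ i ∈ Finset.range n, f^[i] '' K := by
  have hm : f^[m] x = f^[m % n] ((f^[n])^[m / n] x) := by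
    rw [← iterate_mul, ← iterate_add_apply, Nat.mod_add_div]
  rw [hm]
  exact mem_biUnion (Finset.mem_range.2 (Nat.mod_lt m hn)) (mem_image_of_mem _ (hx _))

theorem IsClosedMap.iterate {α : Type*} [TopologicalSpace α] {f : α → α} (hf : IsClosedMap f) :
    ∀ n, IsClosedMap f^[n]
  | 0 => IsClosedMap.id
  | n + 1 => (hf.iterate n).comp hf

section Compact

variable {X : Type*} [TopologicalSpace X] [CompactSpace X]

theorem IsClosed.exists_forall_iterate_mem {f : X → X} (hf : Continuous f) {K : Set X}
    (hK : IsClosed K) (h : ∀ k, ∃ x, ∀ j ≤ k, f^[j] x ∈ K) : ∃ x, ∀ j, f^[j] x ∈ K := by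
  let V : ℕ → Set X := fun k => ⋂ j ∈ Iic k, f^[j] ⁻¹' K
  have hV : ∀ k, IsClosed (V k) := fun k => isClosed_biInter fun j _ => hK.preimage (hf.iterate j)
  obtain ⟨x, hx⟩ := IsCompact.nonempty_iInter_of_sequence_nonempty_isCompact_isClosed V
    (fun k => biInter_subset_biInter_left (Iic_subset_Iic.2 k.le_succ))
    (fun k => (h k).imp fun x hx => mem_iInter₂.2 hx) (hV 0).isCompact hV
  exact ⟨x, fun j => mem_iInter₂.1 (mem_iInter.1 hx j) j self_mem_Iic⟩

theorem Homeomorph.exists_forall_zpow_apply_mem_of_mapsTo (φ : X ≃ₜ X) {Y : Set X}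
    (hY : IsClosed Y) (hne : Y.Nonempty) (hmaps : MapsTo φ Y Y) :
    ∃ z, ∀ m : ℤ, (φ.toEquiv ^ m) z ∈ Y := by
  let W : ℕ → Set X := fun j => φ^[j] '' Y
  have hW : ∀ j, IsClosed (W j) := fun j => φ.isClosedMap.iterate j Y hY
  have hWanti : ∀ j, W (j + 1) ⊆ W j := fun j => by
    simp only [W, iterate_succ, image_comp]
    exact image_mono hmaps.image_subset
  obtain ⟨z, hz⟩ := IsCompact.nonempty_iInter_of_sequence_nonempty_isCompact_isClosed W hWanti
    (fun j => hne.image _) (hW 0).isCompact hW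
  have hzW : ∀ j, z ∈ φ^[j] '' Y := mem_iInter.1 hz
  refine ⟨z, fun m => ?_⟩
  obtain ⟨j, rfl | rfl⟩ := Int.eq_nat_or_neg m
  · rw [zpow_natCast]
    exact hmaps.iterate j (by simpa using hzW 0)
  · obtain ⟨w, hwY, rfl⟩ := hzW j
    rw [zpow_neg, zpow_natCast]
    exact ((φ.toEquiv ^ j).symm_apply_apply w).symm ▸ hwY

theorem Homeomorph.eq_univ_of_isClosed_of_mapsTo (φ : X ≃ₜ X)
    (hmin : ∀ x : X, Dense (range fun m : ℤ => (φ.toEquiv ^ m) x)) {Y : Set X}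
    (hY : IsClosed Y) (hne : Y.Nonempty) (hmaps : MapsTo φ Y Y) : Y = univ := by
  obtain ⟨z, hz⟩ := φ.exists_forall_zpow_apply_mem_of_mapsTo hY hne hmaps
  exact eq_univ_of_univ_subset ((hmin z).closure_eq ▸ closure_minimal (range_subset_iff.2 hz) hY)

end Compact

theorem stmt_19 {X : Type*} [TopologicalSpace X] [CompactSpace X] [T2Space X]
    (φ : X ≃ₜ X)
    -- φ is minimal: every orbit is dense
    (hφmin : ∀ x : X, Dense (Set.range fun m : ℤ => (φ.toEquiv ^ m) x))
    (n : ℕ) (hn : 1 ≤ n)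
    (lam : ℝ → X) (hlam : ContinuousOn lam (Icc 0 1))
    (hproper : (⋃ i ∈ Finset.range n, (⇑φ)^[i] '' (lam '' Icc 0 1)) ≠ Set.univ) :
    ∃ k : ℕ, 2 ≤ k ∧
      ¬∃ s : Fin k → ℝ, (∀ i : Fin k, s i ∈ Icc (0:ℝ) 1) ∧
        ∀ (i : Fin k) (h : (i : ℕ) + 1 < k),
          (⇑φ)^[n] (lam (s i)) = lam (s ⟨(i : ℕ) + 1, h⟩) := by
  by_contra! hchains
  have hK : IsCompact (lam '' Icc 0 1) := isCompact_Icc.image_of_continuousOn hlam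
  obtain ⟨x, hx⟩ := hK.isClosed.exists_forall_iterate_mem (φ.continuous.iterate n) fun k => by
    obtain ⟨s, hs, hchain⟩ := hchains (k + 2) (by omega)
    refine ⟨lam (s ⟨0, by omega⟩), fun j hj => ?_⟩
    rw [iterate_apply_zero_of_chain (a := fun i => lam (s i)) hchain j (by omega)]
    exact mem_image_of_mem lam (hs _)
  let orbit : Set X := range fun m => (⇑φ)^[m] x
  have hmaps : MapsTo φ orbit orbit :=
    mapsTo_range_iff.2 fun m => ⟨m + 1, iterate_succ_apply' φ m x⟩
  have horbit : closure orbit = univ :=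
    φ.eq_univ_of_isClosed_of_mapsTo hφmin isClosed_closure ⟨x, subset_closure ⟨0, rfl⟩⟩
      (hmaps.closure φ.continuous)
  refine hproper (eq_univ_of_univ_subset (horbit ▸ closure_minimal ?_ ?_))
  · exact range_subset_iff.2 (iterate_mem_biUnion_of_forall_iterate_iterate_mem hn hx)
  · exact (Finset.range n).finite_toSet.isClosed_biUnion fun i _ =>
      (hK.image (φ.continuous.iterate i)).isClosed
end
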